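/- arXiv:1906.12046 — 3 statements merged into one kernel-verified Lean document; each statement's English description precedes it below -/
import Mathlib

section
/- Let b, c be nonzero complex numbers and p > 2q > 0 integers with c²/(4b) = p(p-2q)/(p-q)² and c²/(4b) ≠ 1. Define F(t) = (4b - c²)·cosh((q-p)t) - 4b·cosh(qt) + c². Then the fourth derivative of F at 0 is nonzero. -/
/-!
Differentiating `cosh (k t)` four times multiplies it by `k ^ 4`, so the fourth derivative of `F`
at `0` is `(4b - c²)(p - q)⁴ - 4b q⁴`. The ratio condition says exactly `4b - c² = 4b q² / (p - q)²`,
which turns this into `4b q² ((p - q)² - q²) = 4b q² p (p - 2q)`, nonzero since `p > 2q > 0`.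
-/

open Complex

theorem Complex.iteratedDeriv_even_cosh_const_mul (n : ℕ) (k : ℂ) :
    iteratedDeriv (2 * n) (fun t => cosh (k * t)) = fun t => k ^ (2 * n) * cosh (k * t) := by
  rw [iteratedDeriv_comp_const_mul contDiff_cosh, iteratedDeriv_even_cosh]

theorem Complex.iteratedDeriv_even_cosh_combination {n : ℕ} (hn : 0 < n) (a b c k m t : ℂ) :
    iteratedDeriv (2 * n) (fun t => a * cosh (k * t) - b * cosh (m * t) + c) t =
      a * k ^ (2 * n) * cosh (k * t) - b * m ^ (2 * n) * cosh (m * t) := by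
  have hcosh (a k : ℂ) : ContDiffAt ℂ (2 * n) (fun t => a * cosh (k * t)) t :=
    (contDiff_const.mul (contDiff_cosh.comp (contDiff_const.mul contDiff_id))).contDiffAt
  simp_rw [add_comm _ c]
  rw [iteratedDeriv_const_add (by positivity),
    iteratedDeriv_fun_sub (hcosh a k) (hcosh b m), iteratedDeriv_const_mul_field,
    iteratedDeriv_const_mul_field, iteratedDeriv_even_cosh_const_mul,
    iteratedDeriv_even_cosh_const_mul]
  ring

theorem pow_four_sub_eq_of_div_eq {K : Type*} [Field K] [CharZero K] {b c p q : K}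
    (hb : b ≠ 0) (hpq : p - q ≠ 0) (h : c ^ 2 / (4 * b) = p * (p - 2 * q) / (p - q) ^ 2) :
    (4 * b - c ^ 2) * (q - p) ^ 4 - 4 * b * q ^ 4 = 4 * b * q ^ 2 * p * (p - 2 * q) := by
  rw [div_eq_div_iff (by simp [hb]) (pow_ne_zero 2 hpq)] at h
  linear_combination (-(p - q) ^ 2) * h

theorem stmt_4_general (b c : ℂ) (hb : b ≠ 0) (p q : ℕ)
    (hq : 0 < q) (hpq : 2 * q < p)
    (hratio : c ^ 2 / (4 * b) = (p : ℂ) * ((p : ℂ) - 2 * q) / ((p : ℂ) - q) ^ 2)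
    (F : ℂ → ℂ)
    (hF : ∀ t : ℂ, F t = (4 * b - c ^ 2) * Complex.cosh (((q : ℂ) - p) * t)
        - 4 * b * Complex.cosh ((q : ℂ) * t) + c ^ 2) :
    iteratedDeriv 4 F 0 ≠ 0 := by
  have hp_sub_q : (p : ℂ) - q ≠ 0 := sub_ne_zero.mpr (by norm_cast; omega)
  have hp_sub_two_q : (p : ℂ) - 2 * q ≠ 0 := sub_ne_zero.mpr (by norm_cast; omega)
  have hp_ne : (p : ℂ) ≠ 0 := by norm_cast; omega
  have hq_ne : (q : ℂ) ≠ 0 := by norm_cast; omega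
  rw [funext hF, iteratedDeriv_even_cosh_combination (n := 2) two_pos]
  simp only [mul_zero, cosh_zero, mul_one]
  rw [pow_four_sub_eq_of_div_eq hb hp_sub_q hratio]
  exact mul_ne_zero (mul_ne_zero (by simp [hb, hq_ne]) hp_ne) hp_sub_two_q

theorem stmt_4 (b c : ℂ) (hb : b ≠ 0) (hc : c ≠ 0) (p q : ℕ)
    (hq : 0 < q) (hpq : 2 * q < p)
    (hratio : c ^ 2 / (4 * b) = (p : ℂ) * ((p : ℂ) - 2 * q) / ((p : ℂ) - q) ^ 2)
    (hne : (p : ℂ) * ((p : ℂ) - 2 * q) / ((p : ℂ) - q) ^ 2 ≠ 1)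
    (F : ℂ → ℂ)
    (hF : ∀ t : ℂ, F t = (4 * b - c ^ 2) * Complex.cosh (((q : ℂ) - p) * t)
        - 4 * b * Complex.cosh ((q : ℂ) * t) + c ^ 2) :
    iteratedDeriv 4 F 0 ≠ 0 :=
  stmt_4_general b c hb p q hq hpq hratio F hF
end

section
/- Let b, c be nonzero complex numbers and p > 2q > 0 integers with c²/(4b) = p(p-2q)/(p-q)² and p(p-2q)/(p-q)² ≠ 1. Define the polynomial Ψ(z) = c²(z^{p-q} - 1)² - 4b(z^{p-2q} - 1)(z^{p} - 1). Then z = 1 is a zero of Ψ of multiplicity exactly 4. -/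
open Polynomial Finset

private lemma castDF (k : ℕ) : ∀ i : ℕ,
    ((Nat.descFactorial k i : ℂ)) = ∏ t ∈ Finset.range i, ((k : ℂ) - t) := by
  intro i
  induction i with
  | zero => simp
  | succ i ih =>
    rw [Finset.prod_range_succ, ← ih, Nat.descFactorial_succ, Nat.cast_mul]
    rcases le_or_gt i k with h | h
    · rw [Nat.cast_sub h]; ring
    · rw [Nat.descFactorial_eq_zero_iff_lt.mpr h]; simp

private lemma evI (k i : ℕ) (hi : 0 < i) :
    (derivative^[i] ((X : ℂ[X]) ^ k - 1)).eval 1 = ∏ t ∈ Finset.range i, ((k : ℂ) - t) := by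
  rw [iterate_derivative_sub, iterate_derivative_one hi,
    iterate_derivative_X_pow_eq_C_mul]
  simp only [sub_zero, eval_mul, eval_C, eval_pow, eval_X, eval_one, one_pow, mul_one]
  exact castDF k i

private lemma ev0 (k : ℕ) : (derivative^[0] ((X : ℂ[X]) ^ k - 1)).eval 1 = 0 := by simp

private lemma ev1 (k : ℕ) : (derivative^[1] ((X : ℂ[X]) ^ k - 1)).eval 1 = (k : ℂ) := by
  rw [evI k 1 one_pos]; simp

private lemma ev2 (k : ℕ) :
    (derivative^[2] ((X : ℂ[X]) ^ k - 1)).eval 1 = (k : ℂ) * ((k : ℂ) - 1) := by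
  rw [evI k 2 (by norm_num), Finset.prod_range_succ, Finset.prod_range_succ,
    Finset.prod_range_zero]
  push_cast; ring

private lemma ev3 (k : ℕ) :
    (derivative^[3] ((X : ℂ[X]) ^ k - 1)).eval 1
      = (k : ℂ) * ((k : ℂ) - 1) * ((k : ℂ) - 2) := by
  rw [evI k 3 (by norm_num), Finset.prod_range_succ, Finset.prod_range_succ,
    Finset.prod_range_succ, Finset.prod_range_zero]
  push_cast; ring

private lemma ev4 (k : ℕ) :
    (derivative^[4] ((X : ℂ[X]) ^ k - 1)).eval 1
      = (k : ℂ) * ((k : ℂ) - 1) * ((k : ℂ) - 2) * ((k : ℂ) - 3) := by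
  rw [evI k 4 (by norm_num), Finset.prod_range_succ, Finset.prod_range_succ,
    Finset.prod_range_succ, Finset.prod_range_succ, Finset.prod_range_zero]
  push_cast; ring

set_option maxHeartbeats 2000000 in
open Polynomial in
theorem stmt_5 (b c : ℂ) (hb : b ≠ 0) (hc : c ≠ 0) (p q : ℕ)
    (hq : 0 < q) (hpq : 2 * q < p)
    (hratio : c ^ 2 / (4 * b) = (p : ℂ) * ((p : ℂ) - 2 * q) / ((p : ℂ) - q) ^ 2)
    (hne : (p : ℂ) * ((p : ℂ) - 2 * q) / ((p : ℂ) - q) ^ 2 ≠ 1)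
    (Ψ : Polynomial ℂ)
    (hΨ : Ψ = C (c ^ 2) * (X ^ (p - q) - 1) ^ 2
        - C (4 * b) * (X ^ (p - 2 * q) - 1) * (X ^ p - 1)) :
    Ψ.rootMultiplicity 1 = 4 := by
  have hqp : q ≤ p := by omega
  have h2qp : 2 * q ≤ p := by omega
  have hNc : ((p - q : ℕ) : ℂ) = (p : ℂ) - q := by push_cast [Nat.cast_sub hqp]; ring
  have hMc : ((p - 2 * q : ℕ) : ℂ) = (p : ℂ) - 2 * q := by
    push_cast [Nat.cast_sub h2qp]; ring
  have hNne : ((p : ℂ) - q) ≠ 0 := by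
    have h' : ((p - q : ℕ) : ℂ) ≠ 0 := Nat.cast_ne_zero.mpr (by omega)
    rwa [hNc] at h'
  have hMne : ((p : ℂ) - 2 * q) ≠ 0 := by
    have h' : ((p - 2 * q : ℕ) : ℂ) ≠ 0 := Nat.cast_ne_zero.mpr (by omega)
    rwa [hMc] at h'
  have hPne : ((p : ℂ)) ≠ 0 := Nat.cast_ne_zero.mpr (by omega)
  have hb4 : (4 : ℂ) * b ≠ 0 := by simp [hb]
  have key : c ^ 2 * ((p : ℂ) - q) ^ 2 = 4 * b * ((p : ℂ) * ((p : ℂ) - 2 * q)) := by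
    field_simp at hratio
    linear_combination hratio
  have hMP : (p : ℂ) * ((p : ℂ) - 2 * q) ≠ ((p : ℂ) - q) ^ 2 := by
    intro h
    exact hne (by rw [h, div_self (pow_ne_zero 2 hNne)])
  have hΨ' : Ψ = C (c ^ 2) * ((X ^ (p - q) - 1) * (X ^ (p - q) - 1))
      - C (4 * b) * ((X ^ (p - 2 * q) - 1) * (X ^ p - 1)) := by
    rw [hΨ]; ring
  have hc42 : (Nat.choose 4 2) = 6 := by decide
  have hc43 : (Nat.choose 4 3) = 4 := by decide
  have hc32 : (Nat.choose 3 2) = 3 := by decide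
  have hev : ∀ j : ℕ, (derivative^[j] Ψ).eval 1 =
      c ^ 2 * (∑ i ∈ Finset.range (j + 1), (j.choose i : ℂ) *
        ((derivative^[j - i] ((X : ℂ[X]) ^ (p - q) - 1)).eval 1 *
          (derivative^[i] ((X : ℂ[X]) ^ (p - q) - 1)).eval 1))
      - 4 * b * (∑ i ∈ Finset.range (j + 1), (j.choose i : ℂ) *
        ((derivative^[j - i] ((X : ℂ[X]) ^ (p - 2 * q) - 1)).eval 1 *
          (derivative^[i] ((X : ℂ[X]) ^ p - 1)).eval 1)) := by
    intro j
    rw [hΨ', iterate_derivative_sub, iterate_derivative_C_mul, iterate_derivative_C_mul,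
      iterate_derivative_mul, iterate_derivative_mul]
    simp only [nsmul_eq_mul, eval_sub, eval_mul, eval_finset_sum, eval_natCast, eval_C]
  have E4 : (derivative^[4] Ψ).eval 1
      = 8 * b * (((p : ℂ) - 2 * q) * p) * (((p : ℂ) - 2 * q) * p - ((p : ℂ) - q) ^ 2) := by
    rw [hev 4]
    simp only [Finset.sum_range_succ, Finset.sum_range_zero, Nat.reduceSub, hc42, hc43, hc32,
      ev0, ev1, ev2, ev3, ev4, hNc, hMc, Nat.cast_ofNat, Nat.cast_one, Nat.choose_self,
      Nat.choose_zero_right, Nat.choose_one_right, mul_zero, zero_mul, add_zero, zero_add]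
    linear_combination (8 * (((p:ℂ) - q) - 1) * (((p:ℂ) - q) - 2)
      + 6 * (((p:ℂ) - q) - 1) ^ 2) * key
  have h4 : (derivative^[4] Ψ).eval 1 ≠ 0 := by
    rw [E4]
    refine mul_ne_zero (mul_ne_zero ?_ (mul_ne_zero hMne hPne)) (sub_ne_zero.mpr (by rw [mul_comm]; exact hMP))
    intro h
    rcases mul_eq_zero.mp h with h8 | hB
    · norm_num at h8
    · exact hb hB
  have hΨ0 : Ψ ≠ 0 := by
    intro h
    apply h4
    simp [h]
  have hroot : ∀ j ≤ 3, (derivative^[j] Ψ).IsRoot 1 := by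
    intro j hj
    interval_cases j
    · rw [Polynomial.IsRoot, hev 0]
      simp only [Finset.sum_range_succ, Finset.sum_range_zero, Nat.reduceSub, hc42, hc43, hc32,
      ev0, ev1, ev2, ev3, ev4, hNc, hMc, Nat.cast_ofNat, Nat.cast_one, Nat.choose_self,
      Nat.choose_zero_right, Nat.choose_one_right, mul_zero, zero_mul, add_zero, zero_add]
      linear_combination (0:ℂ) * key
    · rw [Polynomial.IsRoot, hev 1]
      simp only [Finset.sum_range_succ, Finset.sum_range_zero, Nat.reduceSub, hc42, hc43, hc32,
      ev0, ev1, ev2, ev3, ev4, hNc, hMc, Nat.cast_ofNat, Nat.cast_one, Nat.choose_self,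
      Nat.choose_zero_right, Nat.choose_one_right, mul_zero, zero_mul, add_zero, zero_add]
      linear_combination (0:ℂ) * key
    · rw [Polynomial.IsRoot, hev 2]
      simp only [Finset.sum_range_succ, Finset.sum_range_zero, Nat.reduceSub, hc42, hc43, hc32,
      ev0, ev1, ev2, ev3, ev4, hNc, hMc, Nat.cast_ofNat, Nat.cast_one, Nat.choose_self,
      Nat.choose_zero_right, Nat.choose_one_right, mul_zero, zero_mul, add_zero, zero_add]
      linear_combination 2 * key
    · rw [Polynomial.IsRoot, hev 3]
      simp only [Finset.sum_range_succ, Finset.sum_range_zero, Nat.reduceSub, hc42, hc43, hc32,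
      ev0, ev1, ev2, ev3, ev4, hNc, hMc, Nat.cast_ofNat, Nat.cast_one, Nat.choose_self,
      Nat.choose_zero_right, Nat.choose_one_right, mul_zero, zero_mul, add_zero, zero_add]
      linear_combination 6 * (((p:ℂ) - q) - 1) * key
  have hlt : 3 < Ψ.rootMultiplicity 1 :=
    Polynomial.lt_rootMultiplicity_of_isRoot_iterate_derivative hΨ0 hroot
  have hle : ¬ 4 < Ψ.rootMultiplicity 1 := by
    intro h
    exact h4 (Polynomial.isRoot_iterate_derivative_of_lt_rootMultiplicity h)
  omega
end

section
/- For complex numbers b, c with b ≠ 0 and positive integers p > 2q satisfying c²/(4b) = p(p-2q)/(p-q)², and for w = e^{qt}, the identity (4b·cosh(qt) - c²)² (q-p)² - 16 q² b² (cosh²(qt) - 1) = (4b - c²)²(q-p)² implies (cosh(qt) - 1)² = 0, hence cosh(qt) = 1. -/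
theorem stmt_7 (b c : ℂ) (hb : b ≠ 0) (p q : ℕ)
    (hq : 0 < q) (hpq : 2 * q < p)
    (hratio : c ^ 2 / (4 * b) = (p : ℂ) * ((p : ℂ) - 2 * q) / ((p : ℂ) - q) ^ 2)
    (t : ℂ)
    (hid : (4 * b * Complex.cosh ((q : ℂ) * t) - c ^ 2) ^ 2 * ((q : ℂ) - p) ^ 2
        - 16 * (q : ℂ) ^ 2 * b ^ 2 * (Complex.cosh ((q : ℂ) * t) ^ 2 - 1)
        = (4 * b - c ^ 2) ^ 2 * ((q : ℂ) - p) ^ 2) :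
    (Complex.cosh ((q : ℂ) * t) - 1) ^ 2 = 0 ∧ Complex.cosh ((q : ℂ) * t) = 1 := by
  set x := Complex.cosh ((q : ℂ) * t) with hx
  have hp0 : (p : ℂ) ≠ 0 := by
    have : p ≠ 0 := by omega
    exact_mod_cast this
  have hpq' : (p : ℂ) - 2 * q ≠ 0 := by
    have h2 : ((2 * q : ℕ) : ℂ) ≠ (p : ℂ) := by
      exact_mod_cast hpq.ne
    push_cast at h2
    exact fun h => h2 (by linear_combination -h)
  have hpsubq : (p : ℂ) - q ≠ 0 := by
    have hne : p ≠ q := by omega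
    have : (p : ℂ) ≠ (q : ℂ) := by exact_mod_cast hne
    exact sub_ne_zero.mpr this
  have hc2 : c ^ 2 * ((p : ℂ) - q) ^ 2 = 4 * b * ((p : ℂ) * ((p : ℂ) - 2 * q)) := by
    field_simp at hratio
    linear_combination hratio
  have key : 16 * b ^ 2 * (p : ℂ) * ((p : ℂ) - 2 * q) * (x - 1) ^ 2 = 0 := by
    linear_combination hid + 8 * b * (x - 1) * hc2
  have h16 : (16 : ℂ) * b ^ 2 * (p : ℂ) * ((p : ℂ) - 2 * q) ≠ 0 := by
    apply mul_ne_zero (mul_ne_zero (mul_ne_zero (by norm_num) (pow_ne_zero 2 hb)) hp0) hpq'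
  have h1 : (x - 1) ^ 2 = 0 := (mul_eq_zero.mp key).resolve_left h16
  refine ⟨h1, ?_⟩
  have := pow_eq_zero_iff (n := 2) (by norm_num) |>.mp h1
  exact sub_eq_zero.mp this
end
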